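/- arXiv:1007.4543 — 3 statements merged into one kernel-verified Lean document; each statement's English description precedes it below -/
import Mathlib

section
/- For the weight structure w on the triangulated category T generated by a negative subcategory H (with H ⊆ T^{w=0}), the class T^{w≤0} is the envelope (smallest Karoubi-closed extension-stable subclass) of ∪_{i≥0} H[i], and T^{w≥0} is the envelope of ∪_{i≤0} H[i]. -/
open CategoryTheory Category Limits Pretriangulated

/-- `X` is a retract of `Y`. -/
def IsRetract {C : Type*} [Category C] (X Y : C) : Prop :=
  ∃ (i : X ⟶ Y) (r : Y ⟶ X), i ≫ r = 𝟙 X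

/-- A weight structure on a triangulated category `C`, given by the pair of classes
`le = C^{w≤0}` and `ge = C^{w≥0}` (Bondarko). -/
structure IsWeightStructure (C : Type*) [Category C] [HasZeroObject C] [HasShift C ℤ]
    [Preadditive C] [∀ n : ℤ, (shiftFunctor C n).Additive] [Pretriangulated C]
    (le ge : Set C) : Prop where
  le_retract : ∀ ⦃X Y : C⦄, Y ∈ le → IsRetract X Y → X ∈ le
  ge_retract : ∀ ⦃X Y : C⦄, Y ∈ ge → IsRetract X Y → X ∈ ge
  le_shift : ∀ ⦃X : C⦄, X ∈ le → X⟦(1 : ℤ)⟧ ∈ le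
  ge_shift : ∀ ⦃X : C⦄, X ∈ ge → X⟦(-1 : ℤ)⟧ ∈ ge
  orth : ∀ ⦃X Y : C⦄, X ∈ ge → Y ∈ le → ∀ f : X ⟶ Y⟦(1 : ℤ)⟧, f = 0
  decomp : ∀ M : C, ∃ (A B : C) (_ : A ∈ le) (_ : B ∈ ge)
    (f : M ⟶ A) (g : A ⟶ B) (h : B ⟶ M⟦(1 : ℤ)⟧), Triangle.mk f g h ∈ distTriang C
open ZeroObject

variable {C : Type*} [Category C] [HasZeroObject C] [HasShift C ℤ]
  [Preadditive C] [∀ n : ℤ, (shiftFunctor C n).Additive] [Pretriangulated C]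

/-- A class of objects is "thick-triangulated-closed" if it is closed under retracts,
shifts (in both directions) and cones of distinguished triangles. -/
def ThickTriangClosed (T : Set C) : Prop :=
  (∀ ⦃X Y : C⦄, Y ∈ T → IsRetract X Y → X ∈ T) ∧
  (∀ ⦃X : C⦄, X ∈ T → X⟦(1 : ℤ)⟧ ∈ T) ∧
  (∀ ⦃X : C⦄, X ∈ T → X⟦(-1 : ℤ)⟧ ∈ T) ∧
  (∀ Tr ∈ distTriang C, Tr.obj₁ ∈ T → Tr.obj₂ ∈ T → Tr.obj₃ ∈ T)

/-- The Karoubi-closure of the triangulated subcategory generated by `S`. -/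
def thickClosure (S : Set C) : Set C := ⋂₀ {T : Set C | S ⊆ T ∧ ThickTriangClosed T}

/-- A class of objects is Karoubi-closed and extension-stable. -/
def EnvClosed (T : Set C) : Prop :=
  (∀ ⦃X Y : C⦄, Y ∈ T → IsRetract X Y → X ∈ T) ∧
  (∀ Tr ∈ distTriang C, Tr.obj₁ ∈ T → Tr.obj₃ ∈ T → Tr.obj₂ ∈ T)

/-- The envelope of a class `D`: the smallest Karoubi-closed extension-stable class
containing `D`. -/
def envelope (D : Set C) : Set C := ⋂₀ {T : Set C | D ⊆ T ∧ EnvClosed T}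

/-!
Every object `M` is a retract of an object `N` of the triangulated subcategory generated by `S`
(without Karoubi closure), and every such `N` has a weight decomposition `N → A → B → N⟦1⟧`
whose `w ≤ 0` part `A` lies in the envelope `E` of the `S⟦i⟧`, `i ≥ 0`: for shifts of objects of
`S` (which have weight `0`) this is immediate, and such decompositions are stable under
extensions. If moreover `M ∈ le`, then `Hom(B⟦-1⟧, M) = 0` makes `M` a retract of `A`, so
`M ∈ E`; conversely `le` is Karoubi-closed and extension-stable. The case of `ge` is dual.

Extension-stability is proved without the octahedral axiom. Given decompositions of the ends of
`X → Y → W → X⟦1⟧`, the connecting map lifts to `d : A_W → A_X⟦1⟧`; its cocone `A` is an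
extension of `A_X` and `A_W` and receives a morphism of triangles from `X → Y → W`. The cone
of `μ : Y → A` is then in `ge` by orthogonality, which the four lemma for `Hom(-, Z)`
reduces to the given decompositions.
-/

open Preadditive

section Retract

variable {D : Type*} [Category D]

lemma IsRetract.refl (X : D) : IsRetract X X := ⟨𝟙 X, 𝟙 X, by simp⟩

lemma IsRetract.of_iso {X Y : D} (e : X ≅ Y) : IsRetract X Y := ⟨e.hom, e.inv, e.hom_inv_id⟩

lemma IsRetract.trans {X Y Z : D} (h₁ : IsRetract X Y) (h₂ : IsRetract Y Z) : IsRetract X Z := by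
  obtain ⟨i, r, hir⟩ := h₁
  obtain ⟨i', r', hir'⟩ := h₂
  exact ⟨i ≫ i', r' ≫ r, by simp [reassoc_of% hir', hir]⟩

lemma IsRetract.map {X Y : D} (h : IsRetract X Y) {D' : Type*} [Category D'] (F : D ⥤ D') :
    IsRetract (F.obj X) (F.obj Y) := by
  obtain ⟨i, r, hir⟩ := h
  exact ⟨F.map i, F.map r, by rw [← F.map_comp, hir, F.map_id]⟩

lemma isRetract_zero [HasZeroMorphisms D] [HasZeroObject D] (Y : D) : IsRetract (0 : D) Y :=
  ⟨0, 0, by simp⟩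

end Retract

section HomExactness

variable {D : Type*} [Category D] [Preadditive D]

def PrecompInjective {X Y : D} (f : X ⟶ Y) (Z : D) : Prop :=
  ∀ α : Y ⟶ Z, f ≫ α = 0 → α = 0

def PrecompSurjective {X Y : D} (f : X ⟶ Y) (Z : D) : Prop :=
  ∀ β : X ⟶ Z, ∃ α : Y ⟶ Z, β = f ≫ α

def PostcompInjective (Z : D) {X Y : D} (f : X ⟶ Y) : Prop :=
  ∀ α : Z ⟶ X, α ≫ f = 0 → α = 0

def PostcompSurjective (Z : D) {X Y : D} (f : X ⟶ Y) : Prop :=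
  ∀ β : Z ⟶ Y, ∃ α : Z ⟶ X, β = α ≫ f

end HomExactness

namespace Triangle

variable {T : Triangle C}

lemma yoneda_exact₁ (hT : T ∈ distTriang C) {X : C} (f : T.obj₁⟦(1 : ℤ)⟧ ⟶ X)
    (hf : T.mor₃ ≫ f = 0) : ∃ g : T.obj₂⟦(1 : ℤ)⟧ ⟶ X, f = T.mor₁⟦1⟧' ≫ g := by
  obtain ⟨g, hg⟩ : ∃ g : T.obj₂⟦(1 : ℤ)⟧ ⟶ X, f = (-T.mor₁⟦(1 : ℤ)⟧') ≫ g :=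
    Triangle.yoneda_exact₂ _ (rot_of_distTriang _ (rot_of_distTriang _ hT)) f hf
  exact ⟨-g, by rw [hg, neg_comp, comp_neg]⟩

lemma yoneda_exact₂_shift (hT : T ∈ distTriang C) {X : C} (f : T.obj₂⟦(1 : ℤ)⟧ ⟶ X)
    (hf : T.mor₁⟦1⟧' ≫ f = 0) : ∃ g : T.obj₃⟦(1 : ℤ)⟧ ⟶ X, f = T.mor₂⟦1⟧' ≫ g := by
  obtain ⟨g, hg⟩ : ∃ g : T.obj₃⟦(1 : ℤ)⟧ ⟶ X, f = (-T.mor₂⟦(1 : ℤ)⟧') ≫ g :=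
    Triangle.yoneda_exact₂ _
      (rot_of_distTriang _ (rot_of_distTriang _ (rot_of_distTriang _ hT))) f
      (show (-T.mor₁⟦(1 : ℤ)⟧') ≫ f = 0 by rw [neg_comp, hf, neg_zero])
  exact ⟨-g, by rw [hg, neg_comp, comp_neg]⟩

lemma coyoneda_exact₂_shift (hT : T ∈ distTriang C) {X : C} (f : X ⟶ T.obj₂⟦(1 : ℤ)⟧)
    (hf : f ≫ T.mor₂⟦1⟧' = 0) : ∃ g : X ⟶ T.obj₁⟦(1 : ℤ)⟧, f = g ≫ T.mor₁⟦1⟧' := by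
  obtain ⟨g, hg⟩ : ∃ g : X ⟶ T.obj₁⟦(1 : ℤ)⟧, f = g ≫ (-T.mor₁⟦(1 : ℤ)⟧') :=
    Triangle.coyoneda_exact₂ _
      (rot_of_distTriang _ (rot_of_distTriang _ (rot_of_distTriang _ hT))) f
      (show f ≫ (-T.mor₂⟦(1 : ℤ)⟧') = 0 by rw [comp_neg, hf, neg_zero])
  exact ⟨-g, by rw [hg, neg_comp, comp_neg]⟩

lemma hom_obj₃_eq_zero_iff (hT : T ∈ distTriang C) (Z : C) :
    (∀ φ : T.obj₃ ⟶ Z, φ = 0) ↔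
      PrecompInjective T.mor₁ Z ∧ PrecompSurjective (T.mor₁⟦(1 : ℤ)⟧') Z := by
  refine ⟨fun h => ⟨fun α hα => ?_, fun β => yoneda_exact₁ hT β (h _)⟩, ?_⟩
  · obtain ⟨γ, rfl⟩ := Triangle.yoneda_exact₂ _ hT α hα
    rw [h γ, comp_zero]
  · rintro ⟨hinj, hsurj⟩ φ
    obtain ⟨β, rfl⟩ := Triangle.yoneda_exact₃ _ hT φ
      (hinj _ (by rw [← assoc, comp_distTriang_mor_zero₁₂ _ hT, zero_comp]))
    obtain ⟨α, rfl⟩ := hsurj β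
    rw [← assoc, comp_distTriang_mor_zero₃₁ _ hT, zero_comp]

lemma hom_shift_obj₁_eq_zero_iff (hT : T ∈ distTriang C) (Z : C) :
    (∀ φ : Z ⟶ T.obj₁⟦(1 : ℤ)⟧, φ = 0) ↔
      PostcompSurjective Z T.mor₂ ∧ PostcompInjective Z (T.mor₂⟦(1 : ℤ)⟧') := by
  refine ⟨fun h => ⟨fun γ => Triangle.coyoneda_exact₃ _ hT γ (h _), fun β hβ => ?_⟩, ?_⟩
  · obtain ⟨γ, rfl⟩ := coyoneda_exact₂_shift hT β hβ
    rw [h γ, zero_comp]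
  · rintro ⟨hsurj, hinj⟩ φ
    obtain ⟨γ, rfl⟩ := Triangle.coyoneda_exact₁ _ hT φ (hinj _ (by
      rw [assoc, ← Functor.map_comp, comp_distTriang_mor_zero₁₂ _ hT, Functor.map_zero, comp_zero]))
    obtain ⟨β, rfl⟩ := hsurj γ
    rw [assoc, comp_distTriang_mor_zero₂₃ _ hT, comp_zero]

end Triangle

namespace TriangleMorphism

-- The two halves of the four lemma, for `Hom(-, Z)` and for `Hom(Z, -)`.

variable {T T' : Triangle C} (φ : T ⟶ T') {Z : C}

lemma precompInjective_hom₂ (hT : T ∈ distTriang C) (hT' : T' ∈ distTriang C)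
    (h₁ : PrecompInjective φ.hom₁ Z)
    (h₁' : PrecompSurjective (φ.hom₁⟦(1 : ℤ)⟧') Z) (h₃ : PrecompInjective φ.hom₃ Z) :
    PrecompInjective φ.hom₂ Z := by
  intro α hα
  obtain ⟨β, rfl⟩ := Triangle.yoneda_exact₂ _ hT' α
    (h₁ _ (by rw [← assoc, ← φ.comm₁, assoc, hα, comp_zero]))
  obtain ⟨γ, hγ⟩ := Triangle.yoneda_exact₃ _ hT (φ.hom₃ ≫ β) (by rw [← assoc, φ.comm₂, assoc, hα])
  obtain ⟨δ, rfl⟩ := h₁' γ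
  have hβ : β = T'.mor₃ ≫ δ :=
    sub_eq_zero.1 (h₃ _ (by rw [comp_sub, hγ, ← assoc, φ.comm₃, assoc, sub_self]))
  rw [hβ, ← assoc, comp_distTriang_mor_zero₂₃ _ hT', zero_comp]

lemma precompSurjective_shift_hom₂ (hT : T ∈ distTriang C) (hT' : T' ∈ distTriang C)
    (h₁' : PrecompSurjective (φ.hom₁⟦(1 : ℤ)⟧') Z)
    (h₃ : PrecompInjective φ.hom₃ Z) (h₃' : PrecompSurjective (φ.hom₃⟦(1 : ℤ)⟧') Z) :
    PrecompSurjective (φ.hom₂⟦(1 : ℤ)⟧') Z := by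
  intro γ
  obtain ⟨δ, hδ⟩ := h₁' (T.mor₁⟦1⟧' ≫ γ)
  obtain ⟨ε, rfl⟩ := Triangle.yoneda_exact₁ hT' δ (h₃ _ (by
    rw [← assoc, ← φ.comm₃, assoc, ← hδ, ← assoc, comp_distTriang_mor_zero₃₁ _ hT, zero_comp]))
  obtain ⟨η, hη⟩ := Triangle.yoneda_exact₂_shift hT (γ - φ.hom₂⟦1⟧' ≫ ε) (by
    rw [comp_sub, hδ, ← Functor.map_comp_assoc, ← Functor.map_comp_assoc, φ.comm₁, sub_self])
  obtain ⟨θ, rfl⟩ := h₃' η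
  refine ⟨ε + T'.mor₂⟦1⟧' ≫ θ, ?_⟩
  rw [comp_add, ← Functor.map_comp_assoc, ← φ.comm₂, Functor.map_comp_assoc, ← hη,
    add_sub_cancel]

lemma postcompSurjective_hom₂ (hT : T ∈ distTriang C) (hT' : T' ∈ distTriang C)
    (h₁ : PostcompSurjective Z φ.hom₁)
    (h₁' : PostcompInjective Z (φ.hom₁⟦(1 : ℤ)⟧')) (h₃ : PostcompSurjective Z φ.hom₃) :
    PostcompSurjective Z φ.hom₂ := by
  intro β
  obtain ⟨γ, hγ⟩ := h₃ (β ≫ T'.mor₂)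
  obtain ⟨δ, rfl⟩ := Triangle.coyoneda_exact₃ _ hT γ (h₁' _ (by
    rw [assoc, φ.comm₃, ← assoc, ← hγ, assoc, comp_distTriang_mor_zero₂₃ _ hT', comp_zero]))
  obtain ⟨ε, hε⟩ := Triangle.coyoneda_exact₂ _ hT' (β - δ ≫ φ.hom₂) (by
    rw [sub_comp, hγ, assoc, assoc, φ.comm₂, sub_self])
  obtain ⟨η, rfl⟩ := h₁ ε
  refine ⟨δ + η ≫ T.mor₁, ?_⟩
  rw [add_comp, assoc, φ.comm₁, ← assoc, ← hε, add_sub_cancel]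

lemma postcompInjective_shift_hom₂ (hT : T ∈ distTriang C) (hT' : T' ∈ distTriang C)
    (h₁' : PostcompInjective Z (φ.hom₁⟦(1 : ℤ)⟧'))
    (h₃ : PostcompSurjective Z φ.hom₃) (h₃' : PostcompInjective Z (φ.hom₃⟦(1 : ℤ)⟧')) :
    PostcompInjective Z (φ.hom₂⟦(1 : ℤ)⟧') := by
  intro α hα
  obtain ⟨β, rfl⟩ := Triangle.coyoneda_exact₂_shift hT α (h₃' _ (by
    rw [assoc, ← Functor.map_comp, φ.comm₂, Functor.map_comp, ← assoc, hα, zero_comp]))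
  obtain ⟨γ, hγ⟩ := Triangle.coyoneda_exact₁ _ hT' (β ≫ φ.hom₁⟦1⟧') (by
    rw [assoc, ← Functor.map_comp, ← φ.comm₁, Functor.map_comp, ← assoc, hα])
  obtain ⟨δ, rfl⟩ := h₃ γ
  have hβ : β = δ ≫ T.mor₃ :=
    sub_eq_zero.1 (h₁' _ (by rw [sub_comp, hγ, assoc, assoc, φ.comm₃, sub_self]))
  rw [hβ, assoc, comp_distTriang_mor_zero₃₁ _ hT, comp_zero]

end TriangleMorphism

namespace IsWeightStructure

variable {le ge : Set C}

lemma shift_mem_le (w : IsWeightStructure C le ge) {X : C} (hX : X ∈ le) {n : ℤ} (hn : 0 ≤ n) :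
    X⟦n⟧ ∈ le := by
  induction n, hn using Int.leInduction with
  | base => exact w.le_retract hX (.of_iso ((shiftFunctorZero C ℤ).app X))
  | succ k _ ih =>
    exact w.le_retract (w.le_shift ih) (.of_iso ((shiftFunctorAdd' C k 1 (k + 1) rfl).app X))

lemma shift_mem_ge (w : IsWeightStructure C le ge) {X : C} (hX : X ∈ ge) {n : ℤ} (hn : n ≤ 0) :
    X⟦n⟧ ∈ ge := by
  induction n, hn using Int.leInductionDown with
  | base => exact w.ge_retract hX (.of_iso ((shiftFunctorZero C ℤ).app X))
  | pred k _ ih =>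
    exact w.ge_retract (w.ge_shift ih)
      (.of_iso ((shiftFunctorAdd' C k (-1) (k - 1) (by omega)).app X))

lemma shift_neg_one_hom_eq_zero (w : IsWeightStructure C le ge) {B M : C} (hB : B ∈ ge)
    (hM : M ∈ le) (f : B⟦(-1 : ℤ)⟧ ⟶ M) : f = 0 := by
  let e : B⟦(-1 : ℤ)⟧⟦(1 : ℤ)⟧ ≅ B := (shiftFunctorCompIsoId C (-1 : ℤ) 1 (by omega)).app B
  refine (shiftFunctor C (1 : ℤ)).map_injective ?_
  rw [Functor.map_zero, ← cancel_epi e.inv, comp_zero]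
  exact w.orth hB hM _

lemma mem_le_of_forall_hom_eq_zero (w : IsWeightStructure C le ge) {M : C}
    (hM : ∀ X ∈ ge, ∀ f : X ⟶ M⟦(1 : ℤ)⟧, f = 0) : M ∈ le := by
  obtain ⟨A, B, hA, hB, f, g, h, hd⟩ := w.decomp M
  have : Mono f := (Triangle.mk f g h).mono₁ hd (hM B hB h)
  have := isSplitMono_of_mono f
  exact w.le_retract hA ⟨f, retraction f, IsSplitMono.id f⟩

lemma mem_ge_of_forall_hom_eq_zero (w : IsWeightStructure C le ge) {M : C}
    (hM : ∀ Y ∈ le, ∀ f : M ⟶ Y⟦(1 : ℤ)⟧, f = 0) : M ∈ ge := by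
  obtain ⟨A, B, hA, hB, f, g, h, hd⟩ := w.decomp (M⟦(-1 : ℤ)⟧)
  let e : M⟦(-1 : ℤ)⟧⟦(1 : ℤ)⟧ ≅ M := (shiftFunctorCompIsoId C (-1 : ℤ) 1 (by omega)).app M
  have hf : f = 0 := (shiftFunctor C (1 : ℤ)).map_injective (by
    rw [Functor.map_zero, ← cancel_epi e.inv, comp_zero]
    exact hM A hA _)
  have : Epi h := (Triangle.mk f g h).epi₃ hd hf
  have := isSplitEpi_of_epi h
  exact w.ge_retract hB ((IsRetract.of_iso e.symm).trans ⟨section_ h, h, IsSplitEpi.id h⟩)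

lemma le_extension (w : IsWeightStructure C le ge) {T : Triangle C} (hT : T ∈ distTriang C)
    (h₁ : T.obj₁ ∈ le) (h₃ : T.obj₃ ∈ le) : T.obj₂ ∈ le :=
  w.mem_le_of_forall_hom_eq_zero fun _ hZ φ => by
    obtain ⟨ψ, rfl⟩ := Triangle.coyoneda_exact₂_shift hT φ (w.orth hZ h₃ _)
    rw [w.orth hZ h₁ ψ, zero_comp]

lemma ge_extension (w : IsWeightStructure C le ge) {T : Triangle C} (hT : T ∈ distTriang C)
    (h₁ : T.obj₁ ∈ ge) (h₃ : T.obj₃ ∈ ge) : T.obj₂ ∈ ge :=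
  w.mem_ge_of_forall_hom_eq_zero fun _ hY φ => by
    obtain ⟨ψ, rfl⟩ := Triangle.yoneda_exact₂ _ hT φ (w.orth h₁ hY _)
    rw [w.orth h₃ hY ψ, comp_zero]

lemma envClosed_le (w : IsWeightStructure C le ge) : EnvClosed le :=
  ⟨w.le_retract, fun _ hT => w.le_extension hT⟩

lemma envClosed_ge (w : IsWeightStructure C le ge) : EnvClosed ge :=
  ⟨w.ge_retract, fun _ hT => w.ge_extension hT⟩

lemma isRetract_obj₂_of_mem_le (w : IsWeightStructure C le ge) {M : C} (hM : M ∈ le)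
    {T : Triangle C} (hT : T ∈ distTriang C) (h₃ : T.obj₃ ∈ ge) (hR : IsRetract M T.obj₁) :
    IsRetract M T.obj₂ := by
  obtain ⟨i, r, hir⟩ := hR
  obtain ⟨ρ, hρ⟩ : ∃ ρ : T.obj₂ ⟶ M, r = T.mor₁ ≫ ρ :=
    Triangle.yoneda_exact₂ _ (inv_rot_of_distTriang _ hT) r (w.shift_neg_one_hom_eq_zero h₃ hM _)
  exact ⟨i ≫ T.mor₁, ρ, by rw [assoc, ← hρ, hir]⟩

lemma isRetract_obj₂_of_mem_ge (w : IsWeightStructure C le ge) {M : C} (hM : M ∈ ge)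
    {T : Triangle C} (hT : T ∈ distTriang C) (h₁ : T.obj₁ ∈ le) (hR : IsRetract M T.obj₃) :
    IsRetract M T.obj₂ := by
  obtain ⟨i, r, hir⟩ := hR
  obtain ⟨i', hi'⟩ := Triangle.coyoneda_exact₃ _ hT i (w.orth hM h₁ _)
  exact ⟨i', T.mor₂ ≫ r, by rw [← assoc, ← hi', hir]⟩

end IsWeightStructure

def HasLeDecomposition (le ge E : Set C) (N : C) : Prop :=
  ∃ (A B : C) (f : N ⟶ A) (g : A ⟶ B) (h : B ⟶ N⟦(1 : ℤ)⟧),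
    Triangle.mk f g h ∈ distTriang C ∧ A ∈ E ∩ le ∧ B ∈ ge

/-- `P → N → A⟦1⟧` is a weight decomposition `w_{≥0} N → N → w_{≤-1} N` whose `w ≥ 0` part
lies in `E`. -/
def HasGeDecomposition (le ge E : Set C) (N : C) : Prop :=
  ∃ (A P : C) (f : A ⟶ P) (k : P ⟶ N) (h : N ⟶ A⟦(1 : ℤ)⟧),
    Triangle.mk f k h ∈ distTriang C ∧ A ∈ le ∧ P ∈ E ∩ ge

section Decomposition

variable {le ge E : Set C}

lemma HasLeDecomposition.of_iso {N N' : C} (e : N ≅ N') (hN' : HasLeDecomposition le ge E N') :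
    HasLeDecomposition le ge E N := by
  obtain ⟨A, B, f, g, h, hd, hA, hB⟩ := hN'
  refine ⟨A, B, e.hom ≫ f, g, h ≫ e.inv⟦(1 : ℤ)⟧', isomorphic_distinguished _ hd _ ?_, hA, hB⟩
  refine Triangle.isoMk _ _ e (Iso.refl _) (Iso.refl _) (comp_id _)
    ((comp_id _).trans (id_comp _).symm) ?_
  change (h ≫ e.inv⟦(1 : ℤ)⟧') ≫ e.hom⟦(1 : ℤ)⟧' = 𝟙 B ≫ h
  rw [assoc, ← Functor.map_comp, e.inv_hom_id, CategoryTheory.Functor.map_id, comp_id, id_comp]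

lemma HasGeDecomposition.of_iso {N N' : C} (e : N ≅ N') (hN' : HasGeDecomposition le ge E N') :
    HasGeDecomposition le ge E N := by
  obtain ⟨A, P, f, k, h, hd, hA, hP⟩ := hN'
  refine ⟨A, P, f, k ≫ e.inv, e.hom ≫ h, isomorphic_distinguished _ hd _ ?_, hA, hP⟩
  refine Triangle.isoMk _ _ (Iso.refl _) (Iso.refl _) e ((comp_id _).trans (id_comp _).symm)
    ?_ ?_
  · change (k ≫ e.inv) ≫ e.hom = 𝟙 P ≫ k
    rw [assoc, e.inv_hom_id, comp_id, id_comp]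
  · change (e.hom ≫ h) ≫ (𝟙 A)⟦(1 : ℤ)⟧' = e.hom ≫ h
    rw [CategoryTheory.Functor.map_id, comp_id]

namespace IsWeightStructure

lemma hasLeDecomposition_shift (w : IsWeightStructure C le ge)
    (hE : ∀ ⦃X Y : C⦄, Y ∈ E → IsRetract X Y → X ∈ E) {Y : C} (hY : Y ∈ le ∩ ge)
    (hYE : ∀ n : ℤ, 0 ≤ n → Y⟦n⟧ ∈ E) (n : ℤ) : HasLeDecomposition le ge E (Y⟦n⟧) := by
  rcases le_or_gt 0 n with hn | hn
  · exact ⟨Y⟦n⟧, 0, 𝟙 _, 0, 0, contractible_distinguished _,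
      ⟨hYE n hn, w.shift_mem_le hY.1 hn⟩, w.ge_retract hY.2 (isRetract_zero Y)⟩
  · refine ⟨0, Y⟦n⟧⟦(1 : ℤ)⟧, 0, 0, 𝟙 _, contractible_distinguished₂ _,
      ⟨hE (hYE 0 le_rfl) (isRetract_zero _), w.le_retract hY.1 (isRetract_zero Y)⟩, ?_⟩
    exact w.ge_retract (w.shift_mem_ge hY.2 (show n + 1 ≤ 0 by omega))
      (.of_iso ((shiftFunctorAdd' C n 1 (n + 1) rfl).app Y).symm)

lemma hasGeDecomposition_shift (w : IsWeightStructure C le ge)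
    (hE : ∀ ⦃X Y : C⦄, Y ∈ E → IsRetract X Y → X ∈ E) {Y : C} (hY : Y ∈ le ∩ ge)
    (hYE : ∀ n : ℤ, n ≤ 0 → Y⟦n⟧ ∈ E) (n : ℤ) : HasGeDecomposition le ge E (Y⟦n⟧) := by
  rcases le_or_gt n 0 with hn | hn
  · exact ⟨0, Y⟦n⟧, 0, 𝟙 _, 0, contractible_distinguished₁ _,
      w.le_retract hY.1 (isRetract_zero Y), hYE n hn, w.shift_mem_ge hY.2 hn⟩
  · exact HasGeDecomposition.of_iso ((shiftFunctorAdd' C (n - 1) 1 n (by omega)).app Y)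
      ⟨Y⟦n - 1⟧, 0, 0, 0, 𝟙 _, contractible_distinguished₂ _, w.shift_mem_le hY.1 (by omega),
        hE (hYE 0 le_rfl) (isRetract_zero _), w.ge_retract hY.2 (isRetract_zero Y)⟩

lemma hasLeDecomposition_obj₂ (w : IsWeightStructure C le ge)
    (hE : ∀ T ∈ distTriang C, T.obj₁ ∈ E → T.obj₃ ∈ E → T.obj₂ ∈ E)
    {T : Triangle C} (hT : T ∈ distTriang C) (h₁ : HasLeDecomposition le ge E T.obj₁)
    (h₃ : HasLeDecomposition le ge E T.obj₃) : HasLeDecomposition le ge E T.obj₂ := by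
  obtain ⟨A₁, B₁, f₁, g₁, k₁, hd₁, ⟨hA₁E, hA₁⟩, hB₁⟩ := h₁
  obtain ⟨A₃, B₃, f₃, g₃, k₃, hd₃, ⟨hA₃E, hA₃⟩, hB₃⟩ := h₃
  obtain ⟨d, hd⟩ : ∃ d : A₃ ⟶ A₁⟦(1 : ℤ)⟧, T.mor₃ ≫ f₁⟦1⟧' = f₃ ≫ d :=
    Triangle.yoneda_exact₂ _ (inv_rot_of_distTriang _ hd₃) _
      (w.shift_neg_one_hom_eq_zero hB₃ (w.le_shift hA₁) _)
  obtain ⟨A, j, p, hA⟩ := distinguished_cocone_triangle₂ d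
  obtain ⟨μ, hμ₁, hμ₂⟩ := complete_distinguished_triangle_morphism₂ T _ hT hA f₁ f₃ hd
  let φ : T ⟶ Triangle.mk j p d :=
    { hom₁ := f₁, hom₂ := μ, hom₃ := f₃, comm₁ := hμ₁, comm₂ := hμ₂, comm₃ := hd }
  obtain ⟨B, g, k, hB⟩ := distinguished_cocone_triangle μ
  refine ⟨A, B, μ, g, k, hB, ⟨hE _ hA hA₁E hA₃E, w.le_extension hA hA₁ hA₃⟩,
    w.mem_ge_of_forall_hom_eq_zero fun Y hY => ?_⟩
  obtain ⟨i₁, s₁⟩ := (Triangle.hom_obj₃_eq_zero_iff hd₁ _).1 (w.orth hB₁ hY)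
  obtain ⟨i₃, s₃⟩ := (Triangle.hom_obj₃_eq_zero_iff hd₃ _).1 (w.orth hB₃ hY)
  exact (Triangle.hom_obj₃_eq_zero_iff hB _).2
    ⟨TriangleMorphism.precompInjective_hom₂ φ hT hA i₁ s₁ i₃,
      TriangleMorphism.precompSurjective_shift_hom₂ φ hT hA s₁ i₃ s₃⟩

lemma hasGeDecomposition_obj₂ (w : IsWeightStructure C le ge)
    (hE : ∀ T ∈ distTriang C, T.obj₁ ∈ E → T.obj₃ ∈ E → T.obj₂ ∈ E)
    {T : Triangle C} (hT : T ∈ distTriang C) (h₁ : HasGeDecomposition le ge E T.obj₁)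
    (h₃ : HasGeDecomposition le ge E T.obj₃) : HasGeDecomposition le ge E T.obj₂ := by
  obtain ⟨A₁, P₁, f₁, k₁, l₁, hd₁, hA₁, hP₁E, hP₁⟩ := h₁
  obtain ⟨A₃, P₃, f₃, k₃, l₃, hd₃, hA₃, hP₃E, hP₃⟩ := h₃
  obtain ⟨d, hd⟩ : ∃ d : P₃ ⟶ P₁⟦(1 : ℤ)⟧, k₃ ≫ T.mor₃ = d ≫ k₁⟦1⟧' :=
    Triangle.coyoneda_exact₂_shift (rot_of_distTriang _ hd₁) (k₃ ≫ T.mor₃)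
      (w.orth hP₃ (w.le_shift hA₁) _)
  obtain ⟨P, j, p, hP⟩ := distinguished_cocone_triangle₂ d
  obtain ⟨ν, hν₁, hν₂⟩ := complete_distinguished_triangle_morphism₂ _ T hP hT k₁ k₃ hd.symm
  let ψ : Triangle.mk j p d ⟶ T :=
    { hom₁ := k₁, hom₂ := ν, hom₃ := k₃, comm₁ := hν₁, comm₂ := hν₂, comm₃ := hd.symm }
  obtain ⟨A, f, l, hA⟩ := distinguished_cocone_triangle₁ ν
  refine ⟨A, P, f, ν, l, hA, w.mem_le_of_forall_hom_eq_zero fun Z hZ => ?_,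
    hE _ hP hP₁E hP₃E, w.ge_extension hP hP₁ hP₃⟩
  obtain ⟨s₁, i₁⟩ := (Triangle.hom_shift_obj₁_eq_zero_iff hd₁ Z).1 (w.orth hZ hA₁)
  obtain ⟨s₃, i₃⟩ := (Triangle.hom_shift_obj₁_eq_zero_iff hd₃ Z).1 (w.orth hZ hA₃)
  exact (Triangle.hom_shift_obj₁_eq_zero_iff hA Z).2
    ⟨TriangleMorphism.postcompSurjective_hom₂ ψ hP hT s₁ i₁ s₃,
      TriangleMorphism.postcompInjective_shift_hom₂ ψ hP hT i₁ s₃ i₃⟩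

end IsWeightStructure

end Decomposition

lemma exists_distTriang_isRetract_obj₃ {T : Triangle C} (hT : T ∈ distTriang C) {X₁ X₂ : C}
    (h₁ : IsRetract T.obj₁ X₁) (h₂ : IsRetract T.obj₂ X₂) :
    ∃ (X₃ : C) (f : X₁ ⟶ X₂) (g : X₂ ⟶ X₃) (h : X₃ ⟶ X₁⟦(1 : ℤ)⟧),
      Triangle.mk f g h ∈ distTriang C ∧ IsRetract T.obj₃ X₃ := by
  obtain ⟨i₁, r₁, hir₁⟩ := h₁
  obtain ⟨i₂, r₂, hir₂⟩ := h₂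
  obtain ⟨X₃, g, h, hd⟩ := distinguished_cocone_triangle (r₁ ≫ T.mor₁ ≫ i₂)
  have comm : T.mor₁ ≫ i₂ = i₁ ≫ r₁ ≫ T.mor₁ ≫ i₂ := by rw [reassoc_of% hir₁]
  have comm' : (r₁ ≫ T.mor₁ ≫ i₂) ≫ r₂ = r₁ ≫ T.mor₁ := by simp [hir₂]
  obtain ⟨c, hc₂, hc₃⟩ : ∃ c : T.obj₃ ⟶ X₃, T.mor₂ ≫ c = i₂ ≫ g ∧ T.mor₃ ≫ i₁⟦1⟧' = c ≫ h :=
    complete_distinguished_triangle_morphism T _ hT hd i₁ i₂ comm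
  obtain ⟨c', hc'₂, hc'₃⟩ : ∃ c' : X₃ ⟶ T.obj₃, g ≫ c' = r₂ ≫ T.mor₂ ∧ h ≫ r₁⟦1⟧' = c' ≫ T.mor₃ :=
    complete_distinguished_triangle_morphism _ T hd hT r₁ r₂ comm'
  let φ : T ⟶ Triangle.mk _ g h :=
    { hom₁ := i₁, hom₂ := i₂, hom₃ := c, comm₁ := comm, comm₂ := hc₂, comm₃ := hc₃ }
  let φ' : Triangle.mk _ g h ⟶ T :=
    { hom₁ := r₁, hom₂ := r₂, hom₃ := c', comm₁ := comm', comm₂ := hc'₂, comm₃ := hc'₃ }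
  -- `φ ≫ φ'` is the identity on the first two objects, hence an isomorphism on the third.
  have : IsIso (c ≫ c') := isIso₃_of_isIso₁₂ (φ ≫ φ') hT hT
    (by change IsIso (i₁ ≫ r₁); rw [hir₁]; infer_instance)
    (by change IsIso (i₂ ≫ r₂); rw [hir₂]; infer_instance)
  exact ⟨X₃, _, g, h, hd, c, c' ≫ inv (c ≫ c'), by rw [← assoc, IsIso.hom_inv_id]⟩

lemma thickTriangClosed_setOf_isRetract {Φ : Set C} (h₁ : ∀ X ∈ Φ, X⟦(1 : ℤ)⟧ ∈ Φ)
    (h₁' : ∀ X ∈ Φ, X⟦(-1 : ℤ)⟧ ∈ Φ)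
    (hcone : ∀ T ∈ distTriang C, T.obj₁ ∈ Φ → T.obj₂ ∈ Φ → T.obj₃ ∈ Φ) :
    ThickTriangClosed {M : C | ∃ N ∈ Φ, IsRetract M N} := by
  refine ⟨?_, ?_, ?_, ?_⟩
  · rintro X Y ⟨N, hN, hYN⟩ hXY
    exact ⟨N, hN, hXY.trans hYN⟩
  · rintro X ⟨N, hN, hXN⟩
    exact ⟨_, h₁ N hN, hXN.map _⟩
  · rintro X ⟨N, hN, hXN⟩
    exact ⟨_, h₁' N hN, hXN.map _⟩
  · rintro T hT ⟨N₁, hN₁, hR₁⟩ ⟨N₂, hN₂, hR₂⟩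
    obtain ⟨N₃, f, g, h, hd, hR₃⟩ := exists_distTriang_isRetract_obj₃ hT hR₁ hR₂
    exact ⟨N₃, hcone _ hd hN₁ hN₂, hR₃⟩

lemma exists_isRetract_of_thickClosure_eq_univ {S : Set C} (hgen : thickClosure S = Set.univ)
    {P : C → Prop} (hiso : ∀ ⦃X Y : C⦄, (X ≅ Y) → P Y → P X)
    (hext : ∀ T ∈ distTriang C, P T.obj₁ → P T.obj₃ → P T.obj₂)
    (hS : ∀ Y ∈ S, ∀ n : ℤ, P (Y⟦n⟧)) (M : C) : ∃ N, P N ∧ IsRetract M N := by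
  let Φ : Set C := {N | ∀ n : ℤ, P (N⟦n⟧)}
  have hshift (a : ℤ) : ∀ X ∈ Φ, X⟦a⟧ ∈ Φ := fun X hX n =>
    hiso ((shiftFunctorAdd' C a n (a + n) rfl).app X).symm (hX (a + n))
  have hcone : ∀ T ∈ distTriang C, T.obj₁ ∈ Φ → T.obj₂ ∈ Φ → T.obj₃ ∈ Φ := fun T hT h₁ h₂ n =>
    hext _ (rot_of_distTriang _ (Triangle.shift_distinguished T hT n)) (h₂ n)
      (hiso ((shiftFunctorAdd' C n 1 (n + 1) rfl).app T.obj₁).symm (h₁ (n + 1)))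
  have hM : M ∈ thickClosure S := hgen ▸ Set.mem_univ M
  obtain ⟨N, hN, hR⟩ := Set.mem_sInter.1 hM {M' | ∃ N ∈ Φ, IsRetract M' N}
    ⟨fun Y hY => ⟨Y, hS Y hY, .refl Y⟩,
      thickTriangClosed_setOf_isRetract (hshift 1) (hshift (-1)) hcone⟩
  exact ⟨N, hiso ((shiftFunctorZero C ℤ).app N).symm (hN 0), hR⟩

lemma subset_envelope (D : Set C) : D ⊆ envelope D :=
  fun _ hX => Set.mem_sInter.2 fun _ hT => hT.1 hX

lemma envelope_subset {D T : Set C} (hD : D ⊆ T) (hT : EnvClosed T) : envelope D ⊆ T :=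
  fun _ hX => Set.mem_sInter.1 hX T ⟨hD, hT⟩

lemma envClosed_envelope (D : Set C) : EnvClosed (envelope D) :=
  ⟨fun _ _ hY hR => Set.mem_sInter.2 fun T hT => hT.2.1 (Set.mem_sInter.1 hY T hT) hR,
    fun Tr hTr h₁ h₃ => Set.mem_sInter.2 fun T hT =>
      hT.2.2 Tr hTr (Set.mem_sInter.1 h₁ T hT) (Set.mem_sInter.1 h₃ T hT)⟩

namespace IsWeightStructure

variable {le ge : Set C}

lemma le_eq_envelope (w : IsWeightStructure C le ge) {S : Set C}
    (hgen : thickClosure S = Set.univ) (hS : S ⊆ le ∩ ge) :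
    le = envelope {X : C | ∃ Y ∈ S, ∃ i : ℤ, 0 ≤ i ∧ Nonempty (X ≅ Y⟦i⟧)} := by
  have hE := envClosed_envelope {X : C | ∃ Y ∈ S, ∃ i : ℤ, 0 ≤ i ∧ Nonempty (X ≅ Y⟦i⟧)}
  refine Set.Subset.antisymm (fun M hM => ?_) (envelope_subset ?_ w.envClosed_le)
  · obtain ⟨N, ⟨A, B, f, g, h, hd, ⟨hAE, -⟩, hB⟩, hR⟩ :=
      exists_isRetract_of_thickClosure_eq_univ hgen (fun _ _ e => HasLeDecomposition.of_iso e)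
        (fun _ hT => w.hasLeDecomposition_obj₂ hE.2 hT)
        (fun Y hY => w.hasLeDecomposition_shift hE.1 (hS hY)
          fun n hn => subset_envelope _ ⟨Y, hY, n, hn, ⟨Iso.refl _⟩⟩) M
    exact hE.1 hAE (w.isRetract_obj₂_of_mem_le hM hd hB hR)
  · rintro X ⟨Y, hY, i, hi, ⟨e⟩⟩
    exact w.le_retract (w.shift_mem_le (hS hY).1 hi) (.of_iso e)

lemma ge_eq_envelope (w : IsWeightStructure C le ge) {S : Set C}
    (hgen : thickClosure S = Set.univ) (hS : S ⊆ le ∩ ge) :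
    ge = envelope {X : C | ∃ Y ∈ S, ∃ i : ℤ, i ≤ 0 ∧ Nonempty (X ≅ Y⟦i⟧)} := by
  have hE := envClosed_envelope {X : C | ∃ Y ∈ S, ∃ i : ℤ, i ≤ 0 ∧ Nonempty (X ≅ Y⟦i⟧)}
  refine Set.Subset.antisymm (fun M hM => ?_) (envelope_subset ?_ w.envClosed_ge)
  · obtain ⟨N, ⟨A, P, f, k, h, hd, hA, ⟨hPE, -⟩⟩, hR⟩ :=
      exists_isRetract_of_thickClosure_eq_univ hgen (fun _ _ e => HasGeDecomposition.of_iso e)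
        (fun _ hT => w.hasGeDecomposition_obj₂ hE.2 hT)
        (fun Y hY => w.hasGeDecomposition_shift hE.1 (hS hY)
          fun n hn => subset_envelope _ ⟨Y, hY, n, hn, ⟨Iso.refl _⟩⟩) M
    exact hE.1 hPE (w.isRetract_obj₂_of_mem_ge hM hd hA hR)
  · rintro X ⟨Y, hY, i, hi, ⟨e⟩⟩
    exact w.ge_retract (w.shift_mem_ge (hS hY).2 hi) (.of_iso e)

end IsWeightStructure

theorem weightStructure_of_negative_le_ge_description_general
    (S : Set C)
    (hgen : thickClosure S = Set.univ)
    (le ge : Set C) (w : IsWeightStructure C le ge) (hS : S ⊆ le ∩ ge) :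
    le = envelope {X : C | ∃ Y ∈ S, ∃ i : ℤ, 0 ≤ i ∧ Nonempty (X ≅ Y⟦i⟧)} ∧
    ge = envelope {X : C | ∃ Y ∈ S, ∃ i : ℤ, i ≤ 0 ∧ Nonempty (X ≅ Y⟦i⟧)} :=
  ⟨w.le_eq_envelope hgen hS, w.ge_eq_envelope hgen hS⟩

/-- For the weight structure `w` on the triangulated category `T` generated by a negative
subcategory `H` (with `H ⊆ T^{w=0}`; here the ambient category realizes `T`),
`T^{w≤0}` is the envelope of `∪_{i≥0} H[i]` and `T^{w≥0}` is the envelope of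
`∪_{i≤0} H[i]`. -/
theorem weightStructure_of_negative_le_ge_description
    [IsIdempotentComplete C] (S : Set C)
    (hneg : ∀ X ∈ S, ∀ Y ∈ S, ∀ i : ℤ, 0 < i → ∀ f : X ⟶ Y⟦i⟧, f = 0)
    (hgen : thickClosure S = Set.univ)
    (le ge : Set C) (w : IsWeightStructure C le ge) (hS : S ⊆ le ∩ ge) :
    le = envelope {X : C | ∃ Y ∈ S, ∃ i : ℤ, 0 ≤ i ∧ Nonempty (X ≅ Y⟦i⟧)} ∧
    ge = envelope {X : C | ∃ Y ∈ S, ∃ i : ℤ, i ≤ 0 ∧ Nonempty (X ≅ Y⟦i⟧)} :=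
  weightStructure_of_negative_le_ge_description_general S hgen le ge w hS
end

section
/- In the gluing setup D →(i_*) C →(j^*) E with weight structures w_D and w_E, the weight structure w on C glued from w_D and w_E is the unique weight structure on C for which both i_* and j^* are weight-exact. -/
open CategoryTheory Category Limits Pretriangulated

variable {D : Type*} [Category D] [HasZeroObject D] [HasShift D ℤ]
  [Preadditive D] [∀ n : ℤ, (shiftFunctor D n).Additive] [Pretriangulated D]
variable {C : Type*} [Category C] [HasZeroObject C] [HasShift C ℤ]
  [Preadditive C] [∀ n : ℤ, (shiftFunctor C n).Additive] [Pretriangulated C]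
variable {E : Type*} [Category E] [HasZeroObject E] [HasShift E ℤ]
  [Preadditive E] [∀ n : ℤ, (shiftFunctor E n).Additive] [Pretriangulated E]

/-! Gluing data (recollement) `D →(i_*) C →(j^*) E`: the six exact functors
`iS = i_*`, `iU = i^*`, `iSh = i^!`, `jU = j^*`, `jL = j_!`, `jR = j_*`, with the
adjunctions `(i^*, i_*)`, `(i_*, i^!)`, `(j_!, j^*)`, `(j^*, j_*)`, `i_*` fully
faithful with image the kernel of `j^*`, the two gluing distinguished triangles, and
`i^* j_! = 0 = i^! j_*`. -/

variable (iS : D ⥤ C) (iU : C ⥤ D) (iSh : C ⥤ D)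
  (jU : C ⥤ E) (jL : E ⥤ C) (jR : E ⥤ C)
  [iS.CommShift ℤ] [iS.IsTriangulated] [iU.CommShift ℤ] [iU.IsTriangulated]
  [iSh.CommShift ℤ] [iSh.IsTriangulated] [jU.CommShift ℤ] [jU.IsTriangulated]
  [jL.CommShift ℤ] [jL.IsTriangulated] [jR.CommShift ℤ] [jR.IsTriangulated]
  [iS.Full] [iS.Faithful]

/-! Each class of a weight structure is the orthogonal of the other one. The right (left)
adjoint of a functor that preserves `w ≥ 0` (`w ≤ 0`) therefore preserves `w ≤ 0` (`w ≥ 0`), so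
any `w` making `i_*` and `j^*` weight-exact has its classes inside the glued ones. The glued
classes are orthogonal to each other, since by the gluing triangle `j_! j^* M → M → i_* i^* M`
every `M` of glued weight `≥ 0` is an extension of objects orthogonal to the glued `w ≤ 0`;
this forces the inclusions to be equalities. -/

lemma forall_eq_zero_iff_subsingleton {K : Type*} [Category K] [HasZeroMorphisms K] {X Y : K} :
    (∀ f : X ⟶ Y, f = 0) ↔ Subsingleton (X ⟶ Y) :=
  ⟨fun h => ⟨fun f g => (h f).trans (h g).symm⟩, fun _ _ => Subsingleton.elim _ _⟩

lemma IsRetract.of_iso_s10 {K : Type*} [Category K] {X X' Y : K} (e : X ≅ X') (h : IsRetract X Y) :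
    IsRetract X' Y := by
  obtain ⟨s, r, hsr⟩ := h
  exact ⟨e.inv ≫ s, r ≫ e.hom, by simp [reassoc_of% hsr]⟩

lemma CategoryTheory.Adjunction.forall_eq_zero_iff_shift {K L : Type*}
    [Category K] [Category L]
    [Preadditive K] [Preadditive L] [HasShift K ℤ] [HasShift L ℤ]
    {F : K ⥤ L} {G : L ⥤ K} (adj : F ⊣ G) [G.CommShift ℤ] (X : K) (Y : L) (n : ℤ) :
    (∀ f : F.obj X ⟶ Y⟦n⟧, f = 0) ↔ ∀ g : X ⟶ (G.obj Y)⟦n⟧, g = 0 := by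
  simp only [forall_eq_zero_iff_subsingleton]
  exact ((adj.homEquiv X _).trans
    ((Iso.refl X).homCongr ((G.commShiftIso n).app Y))).subsingleton_congr

section Triangle

variable {T : Triangle C} (hT : T ∈ distTriang C)
include hT

lemma isRetract_obj₁_obj₂_of_mor₃_eq_zero (h : T.mor₃ = 0) : IsRetract T.obj₁ T.obj₂ := by
  have : Mono T.mor₁ := T.mono₁ hT h
  have : IsSplitMono T.mor₁ := isSplitMono_of_mono T.mor₁
  exact ⟨T.mor₁, retraction T.mor₁, IsSplitMono.id T.mor₁⟩

lemma isRetract_obj₃_obj₂_of_mor₃_eq_zero (h : T.mor₃ = 0) : IsRetract T.obj₃ T.obj₂ := by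
  have : Epi T.mor₂ := T.epi₂ hT h
  have : IsSplitEpi T.mor₂ := isSplitEpi_of_epi T.mor₂
  exact ⟨section_ T.mor₂, T.mor₂, IsSplitEpi.id T.mor₂⟩

lemma hom_obj₂_eq_zero_of_distTriang {Y : C} (h₁ : ∀ g : T.obj₁ ⟶ Y, g = 0)
    (h₃ : ∀ g : T.obj₃ ⟶ Y, g = 0) (f : T.obj₂ ⟶ Y) : f = 0 := by
  obtain ⟨g, rfl⟩ := T.yoneda_exact₂ hT f (h₁ _)
  rw [h₃ g, comp_zero]

end Triangle

namespace IsWeightStructure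

variable {le ge : Set C} (w : IsWeightStructure C le ge)
include w

lemma mem_le_iff (M : C) : M ∈ le ↔ ∀ X ∈ ge, ∀ f : X ⟶ M⟦(1 : ℤ)⟧, f = 0 := by
  refine ⟨fun hM X hX f => w.orth hX hM f, fun H => ?_⟩
  obtain ⟨A, B, hA, hB, f, g, h, hT⟩ := w.decomp M
  exact w.le_retract hA (isRetract_obj₁_obj₂_of_mor₃_eq_zero hT (H B hB h))

lemma mem_ge_iff (M : C) : M ∈ ge ↔ ∀ Y ∈ le, ∀ f : M ⟶ Y⟦(1 : ℤ)⟧, f = 0 := by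
  refine ⟨fun hM Y hY f => w.orth hM hY f, fun H => ?_⟩
  obtain ⟨A, B, hA, hB, a, b, c, hT⟩ := w.decomp (M⟦(-1 : ℤ)⟧)
  let e : M⟦(-1 : ℤ)⟧⟦(1 : ℤ)⟧ ≅ M := shiftNegShift M 1
  have hmor₃ : (Triangle.mk a b c).rotate.mor₃ = 0 :=
    (cancel_epi e.inv).1 ((H A hA _).trans comp_zero.symm)
  exact w.ge_retract hB
    ((isRetract_obj₃_obj₂_of_mor₃_eq_zero (rot_of_distTriang _ hT) hmor₃).of_iso_s10 e)

lemma eq_of_subset_of_orth {le' ge' : Set C} (hle : le ⊆ le') (hge : ge ⊆ ge')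
    (horth : ∀ X ∈ ge', ∀ Y ∈ le', ∀ f : X ⟶ Y⟦(1 : ℤ)⟧, f = 0) : le = le' ∧ ge = ge' := by
  refine ⟨hle.antisymm fun M hM => ?_, hge.antisymm fun M hM => ?_⟩
  · exact (w.mem_le_iff M).2 fun X hX => horth X (hge hX) M hM
  · exact (w.mem_ge_iff M).2 fun Y hY => horth M hM Y (hle hY)

end IsWeightStructure

section Adjunction

variable {leD geD : Set D} {le ge : Set C}
  (wD : IsWeightStructure D leD geD) (w : IsWeightStructure C le ge)
include wD w

lemma IsWeightStructure.mapsTo_le_of_adjunction {F : D ⥤ C} {G : C ⥤ D} (adj : F ⊣ G)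
    [G.CommShift ℤ] (hF : Set.MapsTo F.obj geD ge) : Set.MapsTo G.obj le leD :=
  fun M hM => (wD.mem_le_iff _).2 fun X hX =>
    (adj.forall_eq_zero_iff_shift X M 1).1 (w.orth (hF hX) hM)

lemma IsWeightStructure.mapsTo_ge_of_adjunction {F : C ⥤ D} {G : D ⥤ C} (adj : F ⊣ G)
    [G.CommShift ℤ] (hG : Set.MapsTo G.obj leD le) : Set.MapsTo F.obj ge geD :=
  fun M hM => (wD.mem_ge_iff _).2 fun Y hY =>
    (adj.forall_eq_zero_iff_shift M Y 1).2 (w.orth hM (hG hY))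

end Adjunction

lemma glued_orth {iS : D ⥤ C} {iSh : C ⥤ D} {jU : C ⥤ E} {jL : E ⥤ C}
    [iSh.CommShift ℤ] [jU.CommShift ℤ] {leD geD : Set D} {leE geE : Set E}
    (wD : IsWeightStructure D leD geD) (wE : IsWeightStructure E leE geE)
    (adjI : iS ⊣ iSh) (adjJ : jL ⊣ jU) {X M : C} {A : E} {B : D}
    {u : jL.obj A ⟶ X} {v : X ⟶ iS.obj B} {δ : iS.obj B ⟶ (jL.obj A)⟦(1 : ℤ)⟧}
    (hT : Triangle.mk u v δ ∈ distTriang C) (hA : A ∈ geE) (hB : B ∈ geD)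
    (hM₁ : iSh.obj M ∈ leD) (hM₂ : jU.obj M ∈ leE) (f : X ⟶ M⟦(1 : ℤ)⟧) : f = 0 :=
  hom_obj₂_eq_zero_of_distTriang hT
    ((adjJ.forall_eq_zero_iff_shift A M 1).2 (wE.orth hA hM₂))
    ((adjI.forall_eq_zero_iff_shift B M 1).2 (wD.orth hB hM₁)) f

theorem glued_weightStructure_unique
    (adj1 : iU ⊣ iS) (adj2 : iS ⊣ iSh) (adj3 : jL ⊣ jU)
    (tri1 : ∀ M : C, ∃ δ : iS.obj (iU.obj M) ⟶ (jL.obj (jU.obj M))⟦(1 : ℤ)⟧,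
      Triangle.mk (adj3.counit.app M) (adj1.unit.app M) δ ∈ distTriang C)
    (leD geD : Set D) (leE geE : Set E)
    (wD : IsWeightStructure D leD geD) (wE : IsWeightStructure E leE geE)
    (le ge : Set C) (w : IsWeightStructure C le ge)
    (hiS : (∀ X ∈ leD, iS.obj X ∈ le) ∧ (∀ X ∈ geD, iS.obj X ∈ ge))
    (hjU : (∀ M ∈ le, jU.obj M ∈ leE) ∧ (∀ M ∈ ge, jU.obj M ∈ geE)) :
    le = {M : C | iSh.obj M ∈ leD ∧ jU.obj M ∈ leE} ∧
    ge = {M : C | iU.obj M ∈ geD ∧ jU.obj M ∈ geE} := by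
  have hle : le ⊆ {M | iSh.obj M ∈ leD ∧ jU.obj M ∈ leE} := fun M hM =>
    ⟨wD.mapsTo_le_of_adjunction w adj2 hiS.2 hM, hjU.1 M hM⟩
  have hge : ge ⊆ {M | iU.obj M ∈ geD ∧ jU.obj M ∈ geE} := fun M hM =>
    ⟨wD.mapsTo_ge_of_adjunction w adj1 hiS.1 hM, hjU.2 M hM⟩
  refine w.eq_of_subset_of_orth hle hge ?_
  rintro X ⟨hX₁, hX₂⟩ M ⟨hM₁, hM₂⟩ f
  obtain ⟨δ, hT⟩ := tri1 X
  exact glued_orth wD wE adj2 adj3 hT hX₂ hX₁ hM₁ hM₂ f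
end

section
/- Let C be a triangulated category with a weight structure w and an adjacent t-structure t (C^{w≤0} = C^{t≤0}), and suppose t is non-degenerate. Then the heart of t is characterized by C^{t=0} = {M ∈ Obj C : Hom(X, M) = 0 for all X ∈ C^{w=i}, for every i ≠ 0}. -/
open CategoryTheory Category Limits Pretriangulated

/-- A t-structure on a triangulated category `C`, given by the classes
`le = C^{t≤0}` and `ge = C^{t≥0}`. -/
structure IsTStructure (C : Type*) [Category C] [HasZeroObject C] [HasShift C ℤ]
    [Preadditive C] [∀ n : ℤ, (shiftFunctor C n).Additive] [Pretriangulated C]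
    (le ge : Set C) : Prop where
  le_iso : ∀ ⦃X Y : C⦄, Y ∈ le → Nonempty (X ≅ Y) → X ∈ le
  ge_iso : ∀ ⦃X Y : C⦄, Y ∈ ge → Nonempty (X ≅ Y) → X ∈ ge
  le_shift : ∀ ⦃X : C⦄, X ∈ le → X⟦(1 : ℤ)⟧ ∈ le
  ge_shift : ∀ ⦃X : C⦄, X ∈ ge → X⟦(-1 : ℤ)⟧ ∈ ge
  orth : ∀ ⦃X Y : C⦄, X ∈ le → Y⟦(1 : ℤ)⟧ ∈ ge → ∀ f : X ⟶ Y, f = 0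
  decomp : ∀ M : C, ∃ (A B : C) (_ : A ∈ le) (_ : B⟦(1 : ℤ)⟧ ∈ ge)
    (f : A ⟶ M) (g : M ⟶ B) (h : B ⟶ A⟦(1 : ℤ)⟧), Triangle.mk f g h ∈ distTriang C

/-!
Throughout, `X⟦n⟧ ∈ wle` says `X ∈ C^{w≤n}`, and similarly for the other three classes.

If `M` is in the heart and `X ∈ C^{w=i}`, then `Hom(X, M) = 0` by t-orthogonality when `i < 0`
and by w-orthogonality when `i > 0`.

Conversely, suppose `Hom(C^{w=i}, M) = 0` for all `i ≠ 0`. Let `A → M → B` be the t-truncation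
with `B ∈ C^{t≥1}`. A map from `C^{w=j}`, `j > 0`, to `B` lifts to `M`, because its composite to
`A⟦1⟧ ∈ C^{w≤-1}` vanishes, so it is zero. Splitting off the top weight piece of an object of
`C^{w≤k}` and inducting on `k`, `B` is right orthogonal to every `C^{w≤k} = C^{t≤k}`, so
`B ∈ ⋂ C^{t≥n} = 0` and `M ∈ C^{t≤0}`. Dually, the truncation `A → M → B` with `A ∈ C^{t≤-1}`
has `Hom(C^{w=j}, A) = 0` for `j ≤ -1`: such a map vanishes in `M`, so it factors through
`B⟦-1⟧ ∈ C^{t≥1}`. If `A ∈ C^{w≤j}`, the top weight piece `P → A` is therefore zero, so `A` is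
a retract of an object of `C^{w≤j-1}`. Hence `A ∈ ⋂ C^{t≤n} = 0` and `M ∈ C^{t≥0}`.
-/

section ShiftClosure

variable {C : Type*} [Category C] [HasShift C ℤ] {S : Set C}

lemma shift_shift_mem_iff (hS : ∀ ⦃X Y : C⦄, Y ∈ S → (X ≅ Y) → X ∈ S) (X : C) {a b c : ℤ}
    (h : a + b = c) : X⟦a⟧⟦b⟧ ∈ S ↔ X⟦c⟧ ∈ S :=
  ⟨fun hX => hS hX ((shiftFunctorAdd' C a b c h).app X),
    fun hX => hS hX ((shiftFunctorAdd' C a b c h).app X).symm⟩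

lemma shift_zero_mem_iff (hS : ∀ ⦃X Y : C⦄, Y ∈ S → (X ≅ Y) → X ∈ S) (X : C) :
    X⟦(0 : ℤ)⟧ ∈ S ↔ X ∈ S :=
  ⟨fun hX => hS hX ((shiftFunctorZero C ℤ).app X).symm,
    fun hX => hS hX ((shiftFunctorZero C ℤ).app X)⟩

lemma shift_shift_zero_mem_iff (hS : ∀ ⦃X Y : C⦄, Y ∈ S → (X ≅ Y) → X ∈ S) (X : C) {a b : ℤ}
    (h : a + b = 0) : X⟦a⟧⟦b⟧ ∈ S ↔ X ∈ S :=
  ⟨fun hX => hS hX ((shiftFunctorCompIsoId C a b h).app X).symm,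
    fun hX => hS hX ((shiftFunctorCompIsoId C a b h).app X)⟩

lemma shift_mem_of_le (hS : ∀ ⦃X Y : C⦄, Y ∈ S → (X ≅ Y) → X ∈ S)
    (hS₁ : ∀ ⦃X : C⦄, X ∈ S → X⟦(1 : ℤ)⟧ ∈ S) {X : C} {a b : ℤ} (hX : X⟦a⟧ ∈ S) (hab : a ≤ b) :
    X⟦b⟧ ∈ S := by
  induction b, hab using Int.leInduction with
  | base => exact hX
  | succ n _ ih => exact (shift_shift_mem_iff hS X rfl).1 (hS₁ ih)

lemma shift_mem_of_ge (hS : ∀ ⦃X Y : C⦄, Y ∈ S → (X ≅ Y) → X ∈ S)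
    (hS₁ : ∀ ⦃X : C⦄, X ∈ S → X⟦(-1 : ℤ)⟧ ∈ S) {X : C} {a b : ℤ} (hX : X⟦a⟧ ∈ S) (hba : b ≤ a) :
    X⟦b⟧ ∈ S := by
  induction b, hba using Int.leInductionDown with
  | base => exact hX
  | pred n _ ih => exact (shift_shift_mem_iff hS X (by ring)).1 (hS₁ ih)

lemma shift_shift_shift_zero_mem_iff (hS : ∀ ⦃X Y : C⦄, Y ∈ S → (X ≅ Y) → X ∈ S) (X : C)
    {a b c : ℤ} (h : a + b + c = 0) : X⟦a⟧⟦b⟧⟦c⟧ ∈ S ↔ X ∈ S :=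
  (shift_shift_mem_iff hS _ rfl).trans (shift_shift_zero_mem_iff hS X (by rw [← add_assoc, h]))

end ShiftClosure

section Pretriangulated

variable {C : Type*} [Category C] [HasZeroObject C] [HasShift C ℤ]
    [Preadditive C] [∀ n : ℤ, (shiftFunctor C n).Additive] [Pretriangulated C]

lemma distinguished_of_iso_obj₂ {T : Triangle C} (hT : T ∈ distTriang C) {X : C}
    (e : T.obj₂ ≅ X) : Triangle.mk (T.mor₁ ≫ e.hom) (e.inv ≫ T.mor₂) T.mor₃ ∈ distTriang C :=
  isomorphic_distinguished _ hT _ (Triangle.isoMk _ _ (Iso.refl T.obj₁) e.symm (Iso.refl T.obj₃)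
    (show (T.mor₁ ≫ e.hom) ≫ e.inv = 𝟙 T.obj₁ ≫ T.mor₁ by simp)
    (show (e.inv ≫ T.mor₂) ≫ 𝟙 T.obj₃ = e.inv ≫ T.mor₂ by simp)
    (show T.mor₃ ≫ (𝟙 T.obj₁)⟦(1 : ℤ)⟧' = 𝟙 T.obj₃ ≫ T.mor₃ by simp))

namespace IsWeightStructure

variable {wle wge : Set C}

lemma mem_le_of_iso (w : IsWeightStructure C wle wge) ⦃X Y : C⦄ (hY : Y ∈ wle) (e : X ≅ Y) :
    X ∈ wle :=
  w.le_retract hY ⟨e.hom, e.inv, e.hom_inv_id⟩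

lemma mem_ge_of_iso (w : IsWeightStructure C wle wge) ⦃X Y : C⦄ (hY : Y ∈ wge) (e : X ≅ Y) :
    X ∈ wge :=
  w.ge_retract hY ⟨e.hom, e.inv, e.hom_inv_id⟩

lemma shift_mem_le_of_le (w : IsWeightStructure C wle wge) {X : C} {a b : ℤ}
    (hX : X⟦a⟧ ∈ wle) (hab : a ≤ b) : X⟦b⟧ ∈ wle :=
  shift_mem_of_le w.mem_le_of_iso w.le_shift hX hab

lemma shift_mem_ge_of_ge (w : IsWeightStructure C wle wge) {X : C} {a b : ℤ}
    (hX : X⟦a⟧ ∈ wge) (hba : b ≤ a) : X⟦b⟧ ∈ wge :=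
  shift_mem_of_ge w.mem_ge_of_iso w.ge_shift hX hba

lemma hom_eq_zero (w : IsWeightStructure C wle wge) {X Y : C} {a b : ℤ}
    (hX : X⟦a⟧ ∈ wge) (hY : Y⟦b⟧ ∈ wle) (hba : b < a) (f : X ⟶ Y) : f = 0 := by
  rw [← (shiftFunctor C a).map_eq_zero_iff, ← Preadditive.IsIso.comp_right_eq_zero
    (g := ((shiftFunctorAdd' C (a - 1) 1 a (by ring)).app Y).hom)]
  exact w.orth hX (w.shift_mem_le_of_le hY (by omega)) _

lemma mem_le_of_hom_eq_zero (w : IsWeightStructure C wle wge) {Y : C}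
    (h : ∀ ⦃X : C⦄, X ∈ wge → ∀ f : X ⟶ Y⟦(1 : ℤ)⟧, f = 0) : Y ∈ wle := by
  obtain ⟨A, B, hA, hB, f, g, k, hT⟩ := w.decomp Y
  obtain ⟨r, hr⟩ := Triangle.yoneda_exact₂ _ (inv_rot_of_distTriang _ hT) (𝟙 Y) (by
    show (-k⟦(-1 : ℤ)⟧' ≫ (shiftFunctorCompIsoId C (1 : ℤ) (-1) (by omega)).hom.app Y) ≫ 𝟙 Y = 0
    simp [h hB k])
  exact w.le_retract hA ⟨f, r, hr.symm⟩

lemma mem_le_of_distTriang (w : IsWeightStructure C wle wge) {T : Triangle C}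
    (hT : T ∈ distTriang C) (h₁ : T.obj₁ ∈ wle) (h₃ : T.obj₃ ∈ wle) : T.obj₂ ∈ wle := by
  refine w.mem_le_of_hom_eq_zero fun X hX f => ?_
  obtain ⟨k, hk⟩ : ∃ k : (X ⟶ T.obj₁⟦(1 : ℤ)⟧), f = k ≫ (-(T.mor₁⟦(1 : ℤ)⟧')) :=
    Triangle.coyoneda_exact₃ _ (rot_of_distTriang _ (rot_of_distTriang _ hT)) f (by
      show f ≫ (-(T.mor₂⟦(1 : ℤ)⟧')) = 0
      rw [Preadditive.comp_neg, w.orth hX h₃ (f ≫ T.mor₂⟦(1 : ℤ)⟧'), neg_zero])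
  rw [hk, w.orth hX h₁ k, zero_comp]

lemma exists_distTriang_of_shift_mem_le (w : IsWeightStructure C wle wge) {X : C} {n : ℤ}
    (hX : X⟦n⟧ ∈ wle) :
    ∃ (P Q : C) (f : P ⟶ X) (g : X ⟶ Q) (h : Q ⟶ P⟦(1 : ℤ)⟧),
      Triangle.mk f g h ∈ distTriang C ∧ P⟦n⟧ ∈ wle ∧ P⟦n⟧ ∈ wge ∧ Q⟦n - 1⟧ ∈ wle := by
  obtain ⟨A, B, hA, hB, f, g, h, hT⟩ := w.decomp (X⟦n - 1⟧)
  have hB' : B ∈ wle := w.mem_le_of_distTriang (rot_of_distTriang _ hT) hA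
    ((shift_shift_mem_iff w.mem_le_of_iso X (by ring)).2 hX)
  let T := (Triangle.shiftFunctor C (1 - n)).obj (Triangle.mk f g h).invRotate
  have hT' : T ∈ distTriang C := Triangle.shift_distinguished _ (inv_rot_of_distTriang _ hT) _
  let e : T.obj₂ ≅ X := (shiftFunctorCompIsoId C (n - 1) (1 - n) (by ring)).app X
  refine ⟨T.obj₁, T.obj₃, T.mor₁ ≫ e.hom, e.inv ≫ T.mor₂, T.mor₃,
    distinguished_of_iso_obj₂ hT' e, ?_, ?_, ?_⟩
  · exact (shift_shift_shift_zero_mem_iff w.mem_le_of_iso B (by ring)).2 hB'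
  · exact (shift_shift_shift_zero_mem_iff w.mem_ge_of_iso B (by ring)).2 hB
  · exact (shift_shift_zero_mem_iff w.mem_le_of_iso A (by ring)).2 hA

lemma hom_eq_zero_of_shift_mem_le (w : IsWeightStructure C wle wge) {Y : C}
    (h₀ : ∀ ⦃X : C⦄, X ∈ wle → ∀ f : X ⟶ Y, f = 0)
    (hpos : ∀ j : ℤ, 0 < j → ∀ ⦃P : C⦄, P⟦j⟧ ∈ wle → P⟦j⟧ ∈ wge → ∀ f : P ⟶ Y, f = 0)
    {X : C} {k : ℤ} (hX : X⟦k⟧ ∈ wle) (f : X ⟶ Y) : f = 0 := by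
  suffices key : ∀ n : ℤ, 0 ≤ n → ∀ ⦃X : C⦄, X⟦n⟧ ∈ wle → ∀ f : X ⟶ Y, f = 0 from
    key (max k 0) (le_max_right k 0) (w.shift_mem_le_of_le hX (le_max_left k 0)) f
  intro n hn
  induction n, hn using Int.leInduction with
  | base => exact fun X hX => h₀ ((shift_zero_mem_iff w.mem_le_of_iso X).1 hX)
  | succ n _ ih =>
    intro X hX f
    obtain ⟨P, Q, u, v, _, hT, hPle, hPge, hQ⟩ := w.exists_distTriang_of_shift_mem_le hX
    obtain ⟨g, rfl⟩ : ∃ g : Q ⟶ Y, f = v ≫ g := Triangle.yoneda_exact₂ _ hT f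
      (show u ≫ f = 0 from hpos (n + 1) (by omega) hPle hPge _)
    rw [ih (by simpa using hQ) g, comp_zero]

lemma shift_sub_one_mem_le (w : IsWeightStructure C wle wge) {Y : C} {m : ℤ} (hY : Y⟦m⟧ ∈ wle)
    (h : ∀ ⦃P : C⦄, P⟦m⟧ ∈ wle → P⟦m⟧ ∈ wge → ∀ f : P ⟶ Y, f = 0) : Y⟦m - 1⟧ ∈ wle := by
  obtain ⟨P, Q, u, v, _, hT, hPle, hPge, hQ⟩ := w.exists_distTriang_of_shift_mem_le hY
  -- `P ⟶ Y` vanishes, so `Y` is a retract of `Q`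
  obtain ⟨r, hr⟩ : ∃ r : Q ⟶ Y, 𝟙 Y = v ≫ r := Triangle.yoneda_exact₂ _ hT (𝟙 Y)
    (show u ≫ 𝟙 Y = 0 by rw [h hPle hPge u, zero_comp])
  exact w.le_retract hQ
    ⟨v⟦m - 1⟧', r⟦m - 1⟧', by rw [← Functor.map_comp, ← hr, CategoryTheory.Functor.map_id]⟩

lemma shift_mem_le_of_hom_eq_zero (w : IsWeightStructure C wle wge) {Y : C} {m : ℤ}
    (hY : Y⟦m⟧ ∈ wle)
    (h : ∀ j ≤ m, ∀ ⦃P : C⦄, P⟦j⟧ ∈ wle → P⟦j⟧ ∈ wge → ∀ f : P ⟶ Y, f = 0) (k : ℤ) :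
    Y⟦k⟧ ∈ wle := by
  rcases le_total m k with hmk | hkm
  · exact w.shift_mem_le_of_le hY hmk
  · induction k, hkm using Int.leInductionDown with
    | base => exact hY
    | pred n hn ih => exact w.shift_sub_one_mem_le ih (h n hn)

end IsWeightStructure

namespace IsTStructure

variable {tle tge : Set C}

lemma mem_le_of_iso (t : IsTStructure C tle tge) ⦃X Y : C⦄ (hY : Y ∈ tle) (e : X ≅ Y) :
    X ∈ tle :=
  t.le_iso hY ⟨e⟩

lemma mem_ge_of_iso (t : IsTStructure C tle tge) ⦃X Y : C⦄ (hY : Y ∈ tge) (e : X ≅ Y) :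
    X ∈ tge :=
  t.ge_iso hY ⟨e⟩

lemma shift_mem_ge_of_ge (t : IsTStructure C tle tge) {X : C} {a b : ℤ}
    (hX : X⟦a⟧ ∈ tge) (hba : b ≤ a) : X⟦b⟧ ∈ tge :=
  shift_mem_of_ge t.mem_ge_of_iso t.ge_shift hX hba

lemma hom_eq_zero (t : IsTStructure C tle tge) {X Y : C} {a b : ℤ}
    (hX : X⟦a⟧ ∈ tle) (hY : Y⟦b⟧ ∈ tge) (hab : a < b) (f : X ⟶ Y) : f = 0 := by
  rw [← (shiftFunctor C a).map_eq_zero_iff]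
  exact t.orth hX ((shift_shift_mem_iff t.mem_ge_of_iso Y rfl).2
    (t.shift_mem_ge_of_ge hY (by omega))) _

lemma shift_one_mem_ge_of_hom_eq_zero (t : IsTStructure C tle tge) {Y : C}
    (h : ∀ ⦃X : C⦄, X ∈ tle → ∀ f : X ⟶ Y, f = 0) : Y⟦(1 : ℤ)⟧ ∈ tge := by
  obtain ⟨A, B, hA, hB, f, g, k, hT⟩ := t.decomp Y
  obtain ⟨u, hu⟩ := Triangle.coyoneda_exact₂ _ (inv_rot_of_distTriang _ hT) (𝟙 A)
    (show 𝟙 A ≫ f = 0 by rw [h hA f, comp_zero])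
  have hA₀ : IsZero A := by
    rw [IsZero.iff_id_eq_zero, hu, t.hom_eq_zero (a := 0) (b := 2)
      ((shift_zero_mem_iff t.mem_le_of_iso A).2 hA)
      ((shift_shift_mem_iff t.mem_ge_of_iso B (by norm_num)).2 hB) (by norm_num) u]
    exact zero_comp
  have : IsIso g := (Triangle.isZero₁_iff_isIso₂ _ hT).1 hA₀
  exact t.ge_iso hB ⟨(shiftFunctor C (1 : ℤ)).mapIso (asIso g)⟩

lemma shift_mem_ge_of_hom_eq_zero (t : IsTStructure C tle tge) {Y : C} {n : ℤ}
    (h : ∀ ⦃X : C⦄, X⟦n⟧ ∈ tle → ∀ f : X ⟶ Y, f = 0) : Y⟦n + 1⟧ ∈ tge := by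
  refine (shift_shift_mem_iff t.mem_ge_of_iso Y rfl).1
    (t.shift_one_mem_ge_of_hom_eq_zero fun X hX f => ?_)
  rw [← (shiftFunctor C (-n)).map_eq_zero_iff, ← Preadditive.IsIso.comp_right_eq_zero
    (g := ((shiftFunctorCompIsoId C n (-n) (by omega)).app Y).hom)]
  exact h ((shift_shift_zero_mem_iff t.mem_le_of_iso X (by omega)).2 hX) _

end IsTStructure

variable {le wge tge : Set C}

lemma hom_eq_zero_of_mem_heart (w : IsWeightStructure C le wge) (t : IsTStructure C le tge)
    {M : C} (hle : M ∈ le) (hge : M ∈ tge) {i : ℤ} (hi : i ≠ 0) {X : C} (hXle : X⟦i⟧ ∈ le)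
    (hXge : X⟦i⟧ ∈ wge) (f : X ⟶ M) : f = 0 := by
  rcases hi.lt_or_gt with hneg | hpos
  · exact t.hom_eq_zero hXle ((shift_zero_mem_iff t.mem_ge_of_iso M).2 hge) hneg f
  · exact w.hom_eq_zero hXge ((shift_zero_mem_iff w.mem_le_of_iso M).2 hle) hpos f

lemma mem_le_of_hom_eq_zero_of_pos (w : IsWeightStructure C le wge) (t : IsTStructure C le tge)
    (hnd : ∀ Z : C, (∀ n : ℤ, Z⟦n⟧ ∈ tge) → IsZero Z) {M : C}
    (hM : ∀ i : ℤ, 0 < i → ∀ ⦃X : C⦄, X⟦i⟧ ∈ le → X⟦i⟧ ∈ wge → ∀ f : X ⟶ M, f = 0) :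
    M ∈ le := by
  obtain ⟨A, B, hA, hB, f, g, h, hT⟩ := t.decomp M
  have hB₀ : ∀ ⦃X : C⦄, X ∈ le → ∀ u : X ⟶ B, u = 0 := fun X hX u => t.orth hX hB u
  have hBpos : ∀ j : ℤ, 0 < j → ∀ ⦃P : C⦄, P⟦j⟧ ∈ le → P⟦j⟧ ∈ wge → ∀ u : P ⟶ B, u = 0 := by
    intro j hj P hPle hPge u
    have hA₁ : A⟦(1 : ℤ)⟧⟦(0 : ℤ)⟧ ∈ le := (shift_zero_mem_iff w.mem_le_of_iso _).2 (w.le_shift hA)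
    obtain ⟨v, rfl⟩ : ∃ v : P ⟶ M, u = v ≫ g :=
      Triangle.coyoneda_exact₃ _ hT u (w.hom_eq_zero hPge hA₁ hj _)
    rw [hM j hj hPle hPge v, zero_comp]
  have hB_zero : IsZero B := hnd B fun n => by
    simpa using t.shift_mem_ge_of_hom_eq_zero (n := n - 1)
      fun X hX u => w.hom_eq_zero_of_shift_mem_le hB₀ hBpos hX u
  have : IsIso f := (Triangle.isZero₃_iff_isIso₁ _ hT).1 hB_zero
  exact t.le_iso hA ⟨(asIso f).symm⟩

lemma mem_ge_of_hom_eq_zero_of_neg (w : IsWeightStructure C le wge) (t : IsTStructure C le tge)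
    (hnd : ∀ Z : C, (∀ n : ℤ, Z⟦n⟧ ∈ le) → IsZero Z) {M : C}
    (hM : ∀ i : ℤ, i < 0 → ∀ ⦃X : C⦄, X⟦i⟧ ∈ le → X⟦i⟧ ∈ wge → ∀ f : X ⟶ M, f = 0) :
    M ∈ tge := by
  obtain ⟨A, B, hA, hB, f, g, h, hT⟩ := t.decomp (M⟦(-1 : ℤ)⟧)
  let e : M⟦(-1 : ℤ)⟧⟦(1 : ℤ)⟧ ≅ M := (shiftFunctorCompIsoId C (-1) 1 (by norm_num)).app M
  have hneg : ∀ j ≤ -1, ∀ ⦃P : C⦄, P⟦j⟧ ∈ le → P⟦j⟧ ∈ wge → ∀ u : P ⟶ A⟦(1 : ℤ)⟧, u = 0 := by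
    intro j hj P hPle hPge u
    have hu : u ≫ f⟦(1 : ℤ)⟧' = 0 := by
      rw [← Preadditive.IsIso.comp_right_eq_zero (g := e.hom), Category.assoc]
      exact hM j (by omega) hPle hPge _
    obtain ⟨v, rfl⟩ : ∃ v : P ⟶ B, u = v ≫ h :=
      Triangle.coyoneda_exact₃ _ (rot_of_distTriang _ hT) u
        (show u ≫ (-(f⟦(1 : ℤ)⟧')) = 0 by rw [Preadditive.comp_neg, hu, neg_zero])
    rw [t.hom_eq_zero hPle hB (by omega) v, zero_comp]
  have hA_zero : IsZero (A⟦(1 : ℤ)⟧) := hnd _ (w.shift_mem_le_of_hom_eq_zero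
    ((shift_shift_zero_mem_iff w.mem_le_of_iso A (by norm_num)).2 hA) hneg)
  have : IsIso g := (Triangle.isZero₃_iff_isIso₁ _ (rot_of_distTriang _ hT)).1 hA_zero
  exact t.ge_iso hB ⟨e.symm ≪≫ (shiftFunctor C (1 : ℤ)).mapIso (asIso g)⟩

end Pretriangulated

/-- Let `w` be a weight structure on `C` with an adjacent t-structure `t`
(`C^{w≤0} = C^{t≤0}`), `t` non-degenerate. Then the heart of `t` consists exactly of
those `M` receiving no nonzero morphisms from `C^{w=i}` for every `i ≠ 0`
(where `X ∈ C^{w=i}` iff `X⟦i⟧` lies in the heart of `w`). -/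
theorem heart_of_adjacent_tStructure
    {C : Type*} [Category C] [HasZeroObject C] [HasShift C ℤ]
    [Preadditive C] [∀ n : ℤ, (shiftFunctor C n).Additive] [Pretriangulated C]
    (wle wge tle tge : Set C)
    (w : IsWeightStructure C wle wge) (t : IsTStructure C tle tge)
    (adj : wle = tle)
    (nondeg : (∀ M : C, (∀ n : ℤ, (shiftFunctor C n).obj M ∈ tle) → Limits.IsZero M) ∧
      (∀ M : C, (∀ n : ℤ, (shiftFunctor C n).obj M ∈ tge) → Limits.IsZero M)) :
    ∀ M : C, (M ∈ tle ∧ M ∈ tge) ↔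
      (∀ i : ℤ, i ≠ 0 → ∀ X : C,
        (shiftFunctor C i).obj X ∈ wle → (shiftFunctor C i).obj X ∈ wge →
          ∀ f : X ⟶ M, f = 0) := by
  subst adj
  intro M
  refine ⟨fun ⟨hle, hge⟩ i hi X => hom_eq_zero_of_mem_heart w t hle hge hi, fun hM => ⟨?_, ?_⟩⟩
  · exact mem_le_of_hom_eq_zero_of_pos w t nondeg.2 fun i hi X => hM i hi.ne' X
  · exact mem_ge_of_hom_eq_zero_of_neg w t nondeg.1 fun i hi X => hM i hi.ne X
end
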